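/- Let k ≥ 1 be an integer and α a real number. Suppose a, b_1, …, b_{k+1} : (0,∞) → ℝ are functions, a differentiable and each b_j twice differentiable, with b_1(λ) = λ/2 for all λ > 0 and the convention b_{k+2} ≡ 0, satisfying for every integer j with k+2 ≤ j ≤ 2k+2 and all λ > 0: ∑_{m=j−k−1}^{k+1}( −b_{j−m}(λ) b_m''(λ) + b_{j−m}'(λ) b_m'(λ)/2 + 4 a'(λ) b_{j−m}(λ) b_m(λ) + 2 b_{j−m}(λ) b_{m+1}(λ) ) = Λ_j, where Λ_{2k+2} = 2k², Λ_{k+2} = (−1)^k·2αk, and Λ_j = 0 otherwise. Define ϱ(λ) := −2a'(λ) and ℓ_j(λ) := 4^j b_{j+1}(λ) for j = 0, …, k, with ℓ_{k+1} ≡ 0. Then ℓ_0(λ) = λ/2 and (ϱ, ℓ_1, …, ℓ_k) satisfy the k-th member of the Painlevé III hierarchy: 4 ϱ ℓ_k² = −( (ℓ_k²)'' − 3 (ℓ_k')² + τ_0 ) and, for each 1 ≤ p ≤ k, ∑_{q=0}^{p}( ℓ_{k−p+q+1} ℓ_{k−q} − (ℓ_{k−p+q} ℓ_{k−q})'' +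 3 ℓ_{k−p+q}' ℓ_{k−q}' − 4 ϱ ℓ_{k−p+q} ℓ_{k−q} ) = τ_p, where τ_0 = 4^{2k+1} k², τ_k = −(−4)^{k+1} α k, and τ_p = 0 for 0 < p < k. -/

import Mathlib

/-!
With `ℓ_j = 4^j b_{j+1}` and `ϱ = -2a'`, Leibniz's rule `(fg)'' = f''g + 2f'g' + fg''` turns the
`q`-th term of the `p`-th hierarchy equation into `4^(2k-p)` times twice the term
`m = k+1-p+q` of the system equation `j = 2k+2-p`, plus the antisymmetric term
`b_{k-q+1} b''_{k-p+q+1} - b''_{k-q+1} b_{k-p+q+1}`, which cancels in pairs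
under `q ↦ p - q`.
The `p = 0` equation is the case `p = 0` of the same identity, since
`ℓ_{k+1} = 4^{k+1} b_{k+2} = 0`.
-/

open Set Filter Topology

section

open Finset

theorem deriv_deriv_mul {𝕜 𝔸 : Type*} [NontriviallyNormedField 𝕜] [NormedCommRing 𝔸]
    [NormedAlgebra 𝕜 𝔸] {f g : 𝕜 → 𝔸} {x : 𝕜}
    (hf : ∀ᶠ y in 𝓝 x, DifferentiableAt 𝕜 f y) (hg : ∀ᶠ y in 𝓝 x, DifferentiableAt 𝕜 g y)
    (hf' : DifferentiableAt 𝕜 (deriv f) x) (hg' : DifferentiableAt 𝕜 (deriv g) x) :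
    deriv (deriv fun y => f y * g y) x =
      deriv (deriv f) x * g x + 2 * (deriv f x * deriv g x) + f x * deriv (deriv g) x := by
  have hderiv : deriv (fun y => f y * g y) =ᶠ[𝓝 x]
      fun y => deriv f y * g y + f y * deriv g y := by
    filter_upwards [hf, hg] with y hfy hgy using deriv_fun_mul hfy hgy
  rw [hderiv.deriv_eq,
    deriv_fun_add (f := fun y => deriv f y * g y) (g := fun y => f y * deriv g y)
      (hf'.mul hg.self_of_nhds) (hf.self_of_nhds.mul hg'),
    deriv_fun_mul hf' hg.self_of_nhds, deriv_fun_mul hf.self_of_nhds hg']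
  ring

theorem Finset.sum_range_antisymm_reflect_eq_zero {M : Type*} [AddCommGroup M] [IsAddTorsionFree M]
    {F : ℕ → ℕ → M} (hF : ∀ i j, F j i = -F i j) {n p : ℕ} (hp : p ≤ n) :
    ∑ q ∈ range (p + 1), F (n - p + q) (n - q) = 0 := by
  refine self_eq_neg.mp ?_
  calc ∑ q ∈ range (p + 1), F (n - p + q) (n - q)
      = ∑ q ∈ range (p + 1), F (n - p + (p + 1 - 1 - q)) (n - (p + 1 - 1 - q)) :=
        (sum_range_reflect _ _).symm
    _ = ∑ q ∈ range (p + 1), F (n - q) (n - p + q) := by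
        refine sum_congr rfl fun q hq => ?_
        rw [Finset.mem_range] at hq
        congr 1 <;> omega
    _ = -∑ q ∈ range (p + 1), F (n - p + q) (n - q) := by
        rw [← sum_neg_distrib]
        exact sum_congr rfl fun q _ => hF _ _

noncomputable def coupledSystemTerm (a : ℝ → ℝ) (b : ℕ → ℝ → ℝ) (i m : ℕ) (l : ℝ) : ℝ :=
  -(b i l) * deriv (deriv (b m)) l + deriv (b i) l * deriv (b m) l / 2
    + 4 * deriv a l * b i l * b m l + 2 * b i l * b (m + 1) l

noncomputable def hierarchyTerm (ϱ : ℝ → ℝ) (ℓ : ℕ → ℝ → ℝ) (i j : ℕ) (l : ℝ) : ℝ :=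
  ℓ (i + 1) l * ℓ j l - deriv (deriv fun t => ℓ i t * ℓ j t) l
    + 3 * deriv (ℓ i) l * deriv (ℓ j) l - 4 * ϱ l * ℓ i l * ℓ j l

def rescale (b : ℕ → ℝ → ℝ) (j : ℕ) (l : ℝ) : ℝ := 4 ^ j * b (j + 1) l

theorem deriv_rescale (b : ℕ → ℝ → ℝ) (j : ℕ) :
    deriv (rescale b j) = fun l => 4 ^ j * deriv (b (j + 1)) l :=
  deriv_const_mul_field' _

variable {a : ℝ → ℝ} {b : ℕ → ℝ → ℝ}

theorem hierarchyTerm_rescale {i j : ℕ} {l : ℝ}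
    (hi : ∀ᶠ t in 𝓝 l, DifferentiableAt ℝ (b (i + 1)) t)
    (hi' : DifferentiableAt ℝ (deriv (b (i + 1))) l)
    (hj : ∀ᶠ t in 𝓝 l, DifferentiableAt ℝ (b (j + 1)) t)
    (hj' : DifferentiableAt ℝ (deriv (b (j + 1))) l) :
    hierarchyTerm (fun t => -2 * deriv a t) (rescale b) i j l =
      4 ^ (i + j) * (2 * coupledSystemTerm a b (j + 1) (i + 1) l
        + (b (j + 1) l * deriv (deriv (b (i + 1))) l
          - deriv (deriv (b (j + 1))) l * b (i + 1) l)) := by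
  have hleibniz := deriv_deriv_mul (f := rescale b i) (g := rescale b j)
    (hi.mono fun _ h => h.const_mul _) (hj.mono fun _ h => h.const_mul _)
    (by rw [deriv_rescale]; exact hi'.const_mul _) (by rw [deriv_rescale]; exact hj'.const_mul _)
  rw [hierarchyTerm, hleibniz]
  simp only [coupledSystemTerm, deriv_rescale, deriv_const_mul_field', rescale]
  ring

theorem sum_hierarchyTerm_rescale {k p : ℕ} (hp : p ≤ k) {l : ℝ}
    (hb : ∀ n, 1 ≤ n → n ≤ k + 1 →
      (∀ᶠ t in 𝓝 l, DifferentiableAt ℝ (b n) t) ∧ DifferentiableAt ℝ (deriv (b n)) l) :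
    ∑ q ∈ range (p + 1),
        hierarchyTerm (fun t => -2 * deriv a t) (rescale b) (k - p + q) (k - q) l
      = 2 * 4 ^ (2 * k - p) * ∑ m ∈ Finset.Icc (2 * k + 2 - p - k - 1) (k + 1),
          coupledSystemTerm a b (2 * k + 2 - p - m) m l := by
  have hreindex : ∑ m ∈ Finset.Icc (2 * k + 2 - p - k - 1) (k + 1),
      coupledSystemTerm a b (2 * k + 2 - p - m) m l
        = ∑ q ∈ range (p + 1), coupledSystemTerm a b (k - q + 1) (k - p + q + 1) l := by
    rw [← Finset.Ico_add_one_right_eq_Icc, sum_Ico_eq_sum_range,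
      show k + 1 + 1 - (2 * k + 2 - p - k - 1) = p + 1 by omega]
    refine sum_congr rfl fun q hq => ?_
    rw [Finset.mem_range] at hq
    congr 1 <;> omega
  have hcancel := sum_range_antisymm_reflect_eq_zero
    (F := fun i j => b (j + 1) l * deriv (deriv (b (i + 1))) l
      - deriv (deriv (b (j + 1))) l * b (i + 1) l) (fun _ _ => by ring) hp
  rw [hreindex]
  calc _ = ∑ q ∈ range (p + 1),
          (2 * 4 ^ (2 * k - p) * coupledSystemTerm a b (k - q + 1) (k - p + q + 1) l
            + 4 ^ (2 * k - p) * (b (k - q + 1) l * deriv (deriv (b (k - p + q + 1))) l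
              - deriv (deriv (b (k - q + 1))) l * b (k - p + q + 1) l)) := by
        refine sum_congr rfl fun q hq => ?_
        rw [Finset.mem_range] at hq
        obtain ⟨hi, hi'⟩ := hb (k - p + q + 1) (by omega) (by omega)
        obtain ⟨hj, hj'⟩ := hb (k - q + 1) (by omega) (by omega)
        rw [hierarchyTerm_rescale hi hi' hj hj', show k - p + q + (k - q) = 2 * k - p by omega]
        ring
    _ = _ := by rw [sum_add_distrib, ← mul_sum, ← mul_sum, hcancel, mul_zero, add_zero]

end

theorem coupled_painleve_III_at_s_zero_gives_hierarchy (k : ℕ) (α : ℝ)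
    (a : ℝ → ℝ) (b : ℕ → ℝ → ℝ)
    (hb : ∀ j, 1 ≤ j → j ≤ k + 1 → ∀ l ∈ Ioi (0 : ℝ),
      DifferentiableAt ℝ (b j) l ∧ DifferentiableAt ℝ (deriv (b j)) l)
    (hb1 : ∀ l ∈ Ioi (0 : ℝ), b 1 l = l / 2)
    (hbk2 : b (k + 2) = (fun _ => 0))
    (hsys : ∀ j, k + 2 ≤ j → j ≤ 2 * k + 2 → ∀ l ∈ Ioi (0 : ℝ),
      ∑ m ∈ Finset.Icc (j - k - 1) (k + 1),
        (-(b (j - m) l) * deriv (deriv (b m)) l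
          + deriv (b (j - m)) l * deriv (b m) l / 2
          + 4 * deriv a l * b (j - m) l * b m l
          + 2 * b (j - m) l * b (m + 1) l)
        = (if j = 2 * k + 2 then 2 * (k : ℝ) ^ 2
           else if j = k + 2 then (-1 : ℝ) ^ k * 2 * α * k
           else 0))
    (ϱ : ℝ → ℝ) (hϱ : ϱ = fun l => -2 * deriv a l)
    (ℓ : ℕ → ℝ → ℝ) (hℓ : ∀ j, ℓ j = fun l => 4 ^ j * b (j + 1) l) :
    -- ℓ₀(λ) = λ/2
    (∀ l ∈ Ioi (0 : ℝ), ℓ 0 l = l / 2) ∧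
    -- the p = 0 equation, in the form multiplied through by 4 ℓ_k²
    (∀ l ∈ Ioi (0 : ℝ),
      4 * ϱ l * (ℓ k l) ^ 2 =
        -(deriv (deriv (fun t => (ℓ k t) ^ 2)) l - 3 * (deriv (ℓ k) l) ^ 2
          + 4 ^ (2 * k + 1) * (k : ℝ) ^ 2)) ∧
    -- the equations for 1 ≤ p ≤ k
    (∀ p, 1 ≤ p → p ≤ k → ∀ l ∈ Ioi (0 : ℝ),
      ∑ q ∈ Finset.range (p + 1),
        (ℓ (k - p + q + 1) l * ℓ (k - q) l
          - deriv (deriv (fun t => ℓ (k - p + q) t * ℓ (k - q) t)) l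
          + 3 * deriv (ℓ (k - p + q)) l * deriv (ℓ (k - q)) l
          - 4 * ϱ l * ℓ (k - p + q) l * ℓ (k - q) l)
        = (if p = k then -(-4 : ℝ) ^ (k + 1) * α * k else 0)) := by
  obtain rfl : ℓ = rescale b := funext hℓ
  subst hϱ
  have hhierarchy : ∀ p ≤ k, ∀ l ∈ Ioi (0 : ℝ),
      ∑ q ∈ Finset.range (p + 1),
          hierarchyTerm (fun t => -2 * deriv a t) (rescale b) (k - p + q) (k - q) l
        = 2 * 4 ^ (2 * k - p) * (if 2 * k + 2 - p = 2 * k + 2 then 2 * (k : ℝ) ^ 2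
            else if 2 * k + 2 - p = k + 2 then (-1 : ℝ) ^ k * 2 * α * k else 0) := by
    intro p hp l hl
    rw [sum_hierarchyTerm_rescale hp fun n hn1 hn2 =>
      ⟨eventually_of_mem (Ioi_mem_nhds hl) fun t ht => (hb n hn1 hn2 t ht).1,
        (hb n hn1 hn2 l hl).2⟩]
    exact congrArg (2 * 4 ^ (2 * k - p) * ·) (hsys (2 * k + 2 - p) (by omega) (by omega) l hl)
  refine ⟨fun l hl => ?_, fun l hl => ?_, fun p hp hpk l hl => ?_⟩
  · simp [rescale, hb1 l hl]
  · have h0 := hhierarchy 0 k.zero_le l hl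
    have hℓ_top : rescale b (k + 1) l = 0 := by simp [rescale, hbk2]
    simp only [zero_add, Finset.sum_range_one, hierarchyTerm, Nat.sub_zero, add_zero, if_true,
      hℓ_top] at h0
    simp only [sq]
    linear_combination -h0
  · refine (hhierarchy p hpk l hl).trans ?_
    rw [if_neg (by omega)]
    by_cases hpk_eq : p = k
    · rw [if_pos (by omega), if_pos hpk_eq, show 2 * k - p = k by omega, neg_pow (4 : ℝ)]
      ring
    · rw [if_neg (by omega), if_neg hpk_eq, mul_zero]
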